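/- arXiv:1110.0968 — 8 statements merged into one kernel-verified Lean document; each statement's English description precedes it below -/
import Mathlib

section
/- Let F be a finite field with 5^n elements and let x ∈ F with x ≠ 0. If x³ + x is a square in F, then, setting t = x + x⁻¹, the element t³ + t is also a square in F. (This is the part of Lemma 2.1 asserting that the map θ(x) = x + x⁻¹ maps the set A_n of x-coordinates of F_{5^n}-rational points of the elliptic curve y² = x³ + x into itself.) -/
/-! In characteristic 5 we have `(x² + 1)² + x² = (x² - 1)²`, hence
`θ(x)³ + θ(x) = (x² + 1)((x² + 1)² + x²) / x³ = (x³ + x) · ((x² - 1) / x²)²`,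
so `θ(x)³ + θ(x)` differs from `x³ + x` by a square factor. -/

theorem theta_cube_add_theta_eq {F : Type*} [Field F] [CharP F 5] {x : F} (hx : x ≠ 0) :
    (x + x⁻¹) ^ 3 + (x + x⁻¹) = (x ^ 3 + x) * ((x ^ 2 - 1) / x ^ 2) ^ 2 := by
  have h5 : (5 : F) = 0 := CharP.ofNat_eq_zero F 5
  field_simp
  linear_combination (x ^ 4 + x ^ 2) * h5

theorem exists_sq_eq_theta_cube_add_theta {F : Type*} [Field F] [CharP F 5] {x : F}
    (hx : x ≠ 0) {y : F} (hy : y ^ 2 = x ^ 3 + x) :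
    ∃ z : F, z ^ 2 = (x + x⁻¹) ^ 3 + (x + x⁻¹) :=
  ⟨y * ((x ^ 2 - 1) / x ^ 2), by rw [theta_cube_add_theta_eq hx, mul_pow, hy]⟩

theorem theta_maps_An_to_An_general (n : ℕ)
    (F : Type*) [Field F] [Fintype F] (hF : Fintype.card F = 5 ^ n)
    (x : F) (hx : x ≠ 0)
    (h : ∃ y : F, y ^ 2 = x ^ 3 + x) :
    ∃ y : F, y ^ 2 = (x + x⁻¹) ^ 3 + (x + x⁻¹) := by
  have : Fact (Nat.Prime 5) := ⟨Nat.prime_five⟩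
  have : CharP F 5 := charP_of_card_eq_prime_pow hF
  obtain ⟨y, hy⟩ := h
  exact exists_sq_eq_theta_cube_add_theta hx hy

theorem theta_maps_An_to_An (n : ℕ) (hn : 0 < n)
    (F : Type*) [Field F] [Fintype F] (hF : Fintype.card F = 5 ^ n)
    (x : F) (hx : x ≠ 0)
    (h : ∃ y : F, y ^ 2 = x ^ 3 + x) :
    ∃ y : F, y ^ 2 = (x + x⁻¹) ^ 3 + (x + x⁻¹) :=
  theta_maps_An_to_An_general n F hF x hx h
end

section
/- Let F be a finite field with 5^n elements and let x ∈ F with x ≠ 0, x ≠ 1 and x ≠ −1. If x³ + x is not a square in F, then, setting t = x + x⁻¹, the element t³ + t is not a square in F, and moreover t ≠ 1 and t ≠ −1. (This is the part of Lemma 2.1 asserting that θ maps the set B_n into itself.) -/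
/-!
In characteristic 5, `(x² + 1)² + x² = (x² - 1)² + 5x² = (x² - 1)²`, so for `t = x + x⁻¹`
we get `t³ + t = (x³ + x) · ((x² - 1) / x²)²`. Hence for `x ≠ 0, ±1` the elements `t³ + t` and
`x³ + x` differ by a nonzero square factor. If `t = 1` then `x² = x - 1` and `x³ + x = x²`; if
`t = -1` then `x³ + x = -x² = (2x)²`, as `-1 = 4` in characteristic 5.
-/

lemma isSquare_mul_sq_iff {F : Type*} [Field F] {a c : F} (hc : c ≠ 0) :
    IsSquare (a * c ^ 2) ↔ IsSquare a :=
  ⟨fun h => by simpa [hc] using h.div (IsSquare.sq c), fun h => h.mul (IsSquare.sq c)⟩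

section CharFive

variable {F : Type*} [Field F] {x : F}

lemma add_inv_cube_add_add_inv (h5 : (5 : F) = 0) (hx0 : x ≠ 0) :
    (x + x⁻¹) ^ 3 + (x + x⁻¹) = (x ^ 3 + x) * ((x ^ 2 - 1) / x ^ 2) ^ 2 := by
  field_simp
  linear_combination x ^ 2 * (x ^ 2 + 1) * h5

lemma isSquare_add_inv_cube_add_add_inv_iff (h5 : (5 : F) = 0) (hx0 : x ≠ 0) (hx1 : x ≠ 1)
    (hx2 : x ≠ -1) :
    IsSquare ((x + x⁻¹) ^ 3 + (x + x⁻¹)) ↔ IsSquare (x ^ 3 + x) := by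
  have hsq : x ^ 2 - 1 ≠ 0 := by
    rw [sub_ne_zero, Ne, sq_eq_one_iff]
    exact not_or.mpr ⟨hx1, hx2⟩
  rw [add_inv_cube_add_add_inv h5 hx0]
  exact isSquare_mul_sq_iff (div_ne_zero hsq (pow_ne_zero 2 hx0))

lemma isSquare_cube_add_self_of_add_inv_eq_one (hx0 : x ≠ 0) (ht : x + x⁻¹ = 1) :
    IsSquare (x ^ 3 + x) := by
  have hx : x ^ 2 = x - 1 := by
    field_simp at ht
    linear_combination ht
  exact ⟨x, by linear_combination x * hx⟩

lemma isSquare_cube_add_self_of_add_inv_eq_neg_one (h5 : (5 : F) = 0) (hx0 : x ≠ 0)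
    (ht : x + x⁻¹ = -1) : IsSquare (x ^ 3 + x) := by
  have hx : x ^ 2 = -x - 1 := by
    field_simp at ht
    linear_combination ht
  exact ⟨2 * x, by linear_combination (x - 5) * hx + (x + 1) * h5⟩

end CharFive

theorem theta_maps_Bn_to_Bn (n : ℕ) (hn : 0 < n)
    (F : Type*) [Field F] [Fintype F] (hF : Fintype.card F = 5 ^ n)
    (x : F) (hx0 : x ≠ 0) (hx1 : x ≠ 1) (hx2 : x ≠ -1)
    (h : ¬ ∃ y : F, y ^ 2 = x ^ 3 + x) :
    (¬ ∃ y : F, y ^ 2 = (x + x⁻¹) ^ 3 + (x + x⁻¹)) ∧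
      x + x⁻¹ ≠ 1 ∧ x + x⁻¹ ≠ -1 := by
  have h5 : (5 : F) = 0 := by simpa [hF, hn.ne'] using FiniteField.cast_card_eq_zero F
  have exists_sq_iff (a : F) : (∃ y, y ^ 2 = a) ↔ IsSquare a := by
    simp [isSquare_iff_exists_sq, eq_comm]
  simp only [exists_sq_iff] at h ⊢
  refine ⟨?_, ?_, ?_⟩
  · rwa [isSquare_add_inv_cube_add_add_inv_iff h5 hx0 hx1 hx2]
  · exact fun ht => h (isSquare_cube_add_self_of_add_inv_eq_one hx0 ht)
  · exact fun ht => h (isSquare_cube_add_self_of_add_inv_eq_neg_one h5 hx0 ht)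
end

section
/- Let π₅ = 1 + 2i in ℤ[i] and let n be an odd positive integer. Then the highest power of 2 dividing the norm N(π₅ⁿ − 1) is 2²; that is, 4 divides N(π₅ⁿ − 1) but 8 does not. (Odd case of Lemma 2.6.) -/
/-!
Since `π₅² = 1 + 4(i - 1)`, every odd power of `π₅` is congruent to `π₅` modulo 4, so
`π₅ⁿ - 1 = 2(i + 2w)` for some `w`. The norm is then `4 · N(i + 2w)`, and `N(i + 2w)` is odd
because `N z ≡ re z + im z (mod 2)`.
-/

theorem sq_sub_one_dvd_pow_odd_sub_self {R : Type*} [CommRing R] (x : R) (m : ℕ) :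
    x ^ 2 - 1 ∣ x ^ (2 * m + 1) - x := by
  have h : x ^ (2 * m + 1) - x = x * ((x ^ 2) ^ m - 1 ^ m) := by ring
  rw [h]
  exact Dvd.dvd.mul_left (sub_dvd_pow_sub_pow _ _ m) x

namespace GaussianInt

theorem odd_norm_iff (z : GaussianInt) : Odd z.norm ↔ Odd (z.re + z.im) := by
  rw [Zsqrtd.norm_def]
  simp [parity_simps, Int.odd_mul]

theorem norm_two_mul (z : GaussianInt) : (2 * z).norm = 4 * z.norm := by
  rw [Zsqrtd.norm_mul]
  rfl

theorem odd_norm_i_add_two_mul (w : GaussianInt) : Odd (⟨0, 1⟩ + 2 * w : GaussianInt).norm := by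
  rw [odd_norm_iff]
  exact ⟨w.re + w.im, by
    simp only [Zsqrtd.re_add, Zsqrtd.im_add, Zsqrtd.re_mul, Zsqrtd.im_mul, Zsqrtd.re_ofNat,
      Zsqrtd.im_ofNat]
    ring⟩

theorem exists_pi_pow_odd_sub_one (m : ℕ) :
    ∃ w : GaussianInt, (⟨1, 2⟩ : GaussianInt) ^ (2 * m + 1) - 1 = 2 * (⟨0, 1⟩ + 2 * w) := by
  obtain ⟨w, hw⟩ : (4 : GaussianInt) ∣ (⟨1, 2⟩ : GaussianInt) ^ (2 * m + 1) - ⟨1, 2⟩ :=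
    (Dvd.intro ⟨-1, 1⟩ (by decide)).trans (sq_sub_one_dvd_pow_odd_sub_self _ m)
  refine ⟨w, ?_⟩
  rw [← sub_add_sub_cancel _ (⟨1, 2⟩ : GaussianInt), hw]
  ext <;>
    simp only [Zsqrtd.re_add, Zsqrtd.im_add, Zsqrtd.re_sub, Zsqrtd.im_sub, Zsqrtd.re_mul,
      Zsqrtd.im_mul, Zsqrtd.re_ofNat, Zsqrtd.im_ofNat, Zsqrtd.re_one, Zsqrtd.im_one] <;>
    ring

end GaussianInt

theorem norm_pi_pow_sub_one_odd_general (n : ℕ) (hodd : Odd n) :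
    (4 : ℤ) ∣ Zsqrtd.norm ((⟨1, 2⟩ : GaussianInt) ^ n - 1) ∧
      ¬ (8 : ℤ) ∣ Zsqrtd.norm ((⟨1, 2⟩ : GaussianInt) ^ n - 1) := by
  obtain ⟨m, rfl⟩ := hodd
  obtain ⟨w, hw⟩ := GaussianInt.exists_pi_pow_odd_sub_one m
  obtain ⟨k, hk⟩ := GaussianInt.odd_norm_i_add_two_mul w
  rw [hw, GaussianInt.norm_two_mul, hk]
  constructor
  · exact Dvd.intro _ rfl
  · omega

theorem norm_pi_pow_sub_one_odd (n : ℕ) (hn : 0 < n) (hodd : Odd n) :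
    (4 : ℤ) ∣ Zsqrtd.norm ((⟨1, 2⟩ : GaussianInt) ^ n - 1) ∧
      ¬ (8 : ℤ) ∣ Zsqrtd.norm ((⟨1, 2⟩ : GaussianInt) ^ n - 1) :=
  norm_pi_pow_sub_one_odd_general n hodd
end

section
/- Let π₅ = 1 + 2i in ℤ[i] and let n = 2^l·m be an even positive integer, where l ≥ 1 and m is odd. Then the highest power of 2 dividing the norm N(π₅ⁿ − 1) is 2^(3+2l); that is, 2^(3+2l) divides N(π₅ⁿ − 1) but 2^(4+2l) does not. (Even case of Lemma 2.6.) -/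
/-!
Work with the `(1 + i)`-adic valuation `v` on `ℤ[i]`. Since `1 + i` is the prime of norm `2`,
`v₂ (N z) = v z`. From `x² - 1 = (x - 1) ((x - 1) + 2)` and `v 2 = 2`, squaring adds `2` to
`v (x - 1)` as soon as `v (x - 1) > 2`; starting from `π₅² - 1 = -i (1 + i)⁵` this gives
`v (π₅ ^ 2 ^ l - 1) = 3 + 2 l`. Raising to an odd power `m` does not change the valuation
(lifting the exponent for `1 + i ∤ m`).
-/

theorem emultiplicity_pow_mul_of_not_dvd {α : Type*} [CommMonoidWithZero α] [IsCancelMulZero α]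
    {p u : α} (hp : Prime p) (hu : ¬p ∣ u) (k : ℕ) :
    emultiplicity p (p ^ k * u) = k := by
  rw [emultiplicity_mul hp, emultiplicity_pow_self_of_prime hp, emultiplicity_eq_zero.2 hu,
    add_zero]

section

variable {R : Type*} [CommRing R] [IsDomain R] {p : R}

theorem emultiplicity_sq_sub_one (hp : Prime p) {x : R}
    (h : emultiplicity p 2 < emultiplicity p (x - 1)) :
    emultiplicity p (x ^ 2 - 1) = emultiplicity p (x - 1) + emultiplicity p 2 := by
  rw [show x ^ 2 - 1 = (x - 1) * ((x - 1) + 2) by ring, emultiplicity_mul hp,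
    emultiplicity_add_of_gt h]

theorem emultiplicity_pow_two_pow_sub_one (hp : Prime p) {x : R}
    (h : emultiplicity p 2 < emultiplicity p (x - 1)) (l : ℕ) :
    emultiplicity p (x ^ 2 ^ l - 1) = emultiplicity p (x - 1) + l * emultiplicity p 2 := by
  induction l with
  | zero => simp
  | succ l ih =>
    have h' : emultiplicity p 2 < emultiplicity p (x ^ 2 ^ l - 1) :=
      ih ▸ h.trans_le le_self_add
    rw [pow_succ, pow_mul, emultiplicity_sq_sub_one hp h', ih]
    push_cast
    ring

end

namespace GaussianInt

local notation "ℤ[i]" => GaussianInt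

def oneAddI : ℤ[i] := ⟨1, 1⟩

theorem oneAddI_dvd_iff (z : ℤ[i]) : oneAddI ∣ z ↔ 2 ∣ z.norm := by
  constructor
  · rintro ⟨w, rfl⟩
    exact ⟨w.norm, by rw [Zsqrtd.norm_mul]; rfl⟩
  · intro h
    have hsum : Even (z.re + z.im) := by
      rw [Zsqrtd.norm_def, ← even_iff_two_dvd] at h
      simpa [parity_simps] using h
    obtain ⟨k, hk⟩ := hsum
    exact ⟨⟨k, k - z.re⟩, by ext <;> simp [oneAddI]; omega⟩

theorem prime_oneAddI : Prime oneAddI := by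
  refine ⟨by decide, fun hu => ?_, fun a b h => ?_⟩
  · exact absurd ((Zsqrtd.norm_eq_one_iff' (by norm_num) _).2 hu) (by decide)
  · simp only [oneAddI_dvd_iff, Zsqrtd.norm_mul] at h ⊢
    exact Int.prime_two.dvd_mul.1 h

theorem emultiplicity_two_norm (z : ℤ[i]) :
    emultiplicity 2 z.norm = emultiplicity oneAddI z := by
  rcases eq_or_ne z 0 with rfl | hz
  · simp
  obtain ⟨k, w, hw, rfl⟩ := WfDvdMonoid.max_power_factor hz prime_oneAddI.irreducible
  have hnorm : (oneAddI ^ k * w).norm = 2 ^ k * w.norm := by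
    rw [Zsqrtd.norm_mul]
    congr 1
    exact map_pow Zsqrtd.normMonoidHom oneAddI k
  rw [hnorm, emultiplicity_pow_mul_of_not_dvd Int.prime_two ((oneAddI_dvd_iff w).not.1 hw),
    emultiplicity_pow_mul_of_not_dvd prime_oneAddI hw]

theorem emultiplicity_oneAddI_two : emultiplicity oneAddI 2 = 2 := by
  have h : (2 : ℤ[i]) = oneAddI ^ 2 * ⟨0, -1⟩ := by decide
  rw [h, emultiplicity_pow_mul_of_not_dvd prime_oneAddI (by rw [oneAddI_dvd_iff]; decide)]
  rfl

theorem oneAddI_not_dvd_natCast {m : ℕ} (hm : Odd m) : ¬oneAddI ∣ (m : ℤ[i]) := by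
  rw [oneAddI_dvd_iff, Zsqrtd.norm_natCast, ← even_iff_two_dvd]
  simpa [parity_simps] using hm

theorem emultiplicity_oneAddI_pow_two_pow_sub_one (k : ℕ) :
    emultiplicity oneAddI ((⟨1, 2⟩ : ℤ[i]) ^ 2 ^ (k + 1) - 1) = (3 + 2 * (k + 1) : ℕ) := by
  have hsq : (⟨1, 2⟩ : ℤ[i]) ^ 2 - 1 = oneAddI ^ 5 * ⟨0, -1⟩ := by decide
  have h5 : emultiplicity oneAddI ((⟨1, 2⟩ : ℤ[i]) ^ 2 - 1) = 5 := by
    rw [hsq, emultiplicity_pow_mul_of_not_dvd prime_oneAddI (by rw [oneAddI_dvd_iff]; decide)]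
    rfl
  rw [pow_succ', pow_mul, emultiplicity_pow_two_pow_sub_one prime_oneAddI
    (by rw [h5, emultiplicity_oneAddI_two]; decide), h5, emultiplicity_oneAddI_two]
  push_cast
  ring

end GaussianInt

theorem norm_pi_pow_sub_one_even (l m : ℕ) (hl : 1 ≤ l) (hm : Odd m) :
    (2 : ℤ) ^ (3 + 2 * l) ∣ Zsqrtd.norm ((⟨1, 2⟩ : GaussianInt) ^ (2 ^ l * m) - 1) ∧
      ¬ (2 : ℤ) ^ (4 + 2 * l) ∣ Zsqrtd.norm ((⟨1, 2⟩ : GaussianInt) ^ (2 ^ l * m) - 1) := by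
  open GaussianInt in
  obtain ⟨k, rfl⟩ := Nat.exists_eq_add_of_le' hl
  have hx : oneAddI ∣ (⟨1, 2⟩ : GaussianInt) ^ 2 ^ (k + 1) - 1 :=
    dvd_iff_emultiplicity_pos.1 <| by
      rw [emultiplicity_oneAddI_pow_two_pow_sub_one]
      exact_mod_cast Nat.succ_pos _
  have hπ : ¬oneAddI ∣ (⟨1, 2⟩ : GaussianInt) := by rw [oneAddI_dvd_iff]; decide
  have hval := emultiplicity_pow_sub_pow_of_prime prime_oneAddI (y := 1) hx
    (mt prime_oneAddI.dvd_of_dvd_pow hπ) (oneAddI_not_dvd_natCast hm)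
  rw [one_pow, ← pow_mul, emultiplicity_oneAddI_pow_two_pow_sub_one,
    ← emultiplicity_two_norm] at hval
  obtain ⟨hdvd, hndvd⟩ := emultiplicity_eq_coe.1 hval
  exact ⟨hdvd, by rwa [show 4 + 2 * (k + 1) = 3 + 2 * (k + 1) + 1 by ring]⟩
end

section
/- Let π₅ = 1 + 2i in ℤ[i] and let n be an even positive integer. Then the highest power of 2 dividing the norm N(π₅ⁿ + 1) is 2²; that is, 4 divides N(π₅ⁿ + 1) but 8 does not. -/
/-! Since `π₅² = -3 + 4i ≡ 1 (mod 4)`, every even power of `π₅` has the form `1 + 4w`; then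
`π₅ⁿ + 1 = 2 (1 + 2w)` and its norm is `4` times the norm of `1 + 2w`, which is odd. -/

theorem Zsqrtd.norm_add_one_emod_eight {d : ℤ} {z : ℤ√d} (h : (4 : ℤ√d) ∣ z - 1) :
    (z + 1).norm % 8 = 4 := by
  obtain ⟨w, hw⟩ := h
  have hz : z + 1 = 2 * (1 + 2 * w) := by linear_combination hw
  have hnorm : (z + 1).norm = 8 * (2 * w.re + 2 * w.re ^ 2 - 2 * d * w.im ^ 2) + 4 := by
    rw [hz, Zsqrtd.norm_def]
    simp only [Zsqrtd.re_mul, Zsqrtd.im_mul, Zsqrtd.re_add, Zsqrtd.im_add, Zsqrtd.re_ofNat,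
      Zsqrtd.im_ofNat, Zsqrtd.re_one, Zsqrtd.im_one]
    ring
  omega

theorem four_dvd_pi_pow_two_mul_sub_one (k : ℕ) :
    (4 : GaussianInt) ∣ (⟨1, 2⟩ : GaussianInt) ^ (2 * k) - 1 := by
  have hsq : (4 : GaussianInt) ∣ (⟨1, 2⟩ : GaussianInt) ^ 2 - 1 :=
    ⟨⟨-1, 1⟩, by ext <;> simp [sq, Zsqrtd.re_mul, Zsqrtd.im_mul]⟩
  have h := hsq.trans (sub_dvd_pow_sub_pow _ 1 k)
  rwa [one_pow, ← pow_mul] at h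

theorem norm_pi_pow_add_one_even_general (n : ℕ) (heven : Even n) :
    (4 : ℤ) ∣ Zsqrtd.norm ((⟨1, 2⟩ : GaussianInt) ^ n + 1) ∧
      ¬ (8 : ℤ) ∣ Zsqrtd.norm ((⟨1, 2⟩ : GaussianInt) ^ n + 1) := by
  obtain ⟨k, rfl⟩ := heven
  have h := Zsqrtd.norm_add_one_emod_eight (four_dvd_pi_pow_two_mul_sub_one k)
  rw [← two_mul]
  omega

theorem norm_pi_pow_add_one_even (n : ℕ) (hn : 0 < n) (heven : Even n) :
    (4 : ℤ) ∣ Zsqrtd.norm ((⟨1, 2⟩ : GaussianInt) ^ n + 1) ∧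
      ¬ (8 : ℤ) ∣ Zsqrtd.norm ((⟨1, 2⟩ : GaussianInt) ^ n + 1) :=
  norm_pi_pow_add_one_even_general n heven
end

section
/- Let π₅ = 1 + 2i and ρ = −1 + i in ℤ[i], and let n be an odd positive integer. Then ρ² divides π₅ⁿ − 1 in ℤ[i], but ρ³ does not. (That is, the exponent e₀ of ρ in the prime factorization of π₅ⁿ − 1 equals 2 when n is odd; this e₀ is the depth of the trees rooted at the periodic vertices of the graph of θ on A_n.) -/
/-!
Since `π₅ - 1 = -ρ²` and `π₅² - 1 = -ρ⁵`, for odd `n` we have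
`π₅ⁿ - 1 ≡ π₅ - 1 = -ρ² (mod ρ⁵)`; as `ρ` is a nonzero nonunit, `ρ³ ∤ ρ²`.
-/

theorem pow_odd_sub_self_dvd {R : Type*} [CommRing R] (a : R) (k : ℕ) :
    a ^ 2 - 1 ∣ a ^ (2 * k + 1) - a := by
  have h : a ^ (2 * k + 1) - a = a * ((a ^ 2) ^ k - 1 ^ k) := by ring
  exact h ▸ dvd_mul_of_dvd_right (sub_dvd_pow_sub_pow _ _ k) a

namespace GaussianInt

local notation "ρ" => (⟨-1, 1⟩ : GaussianInt)
local notation "π₅" => (⟨1, 2⟩ : GaussianInt)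

theorem pi_five_sub_one : π₅ - 1 = -ρ ^ 2 := by decide

theorem pi_five_sq_sub_one : π₅ ^ 2 - 1 = -ρ ^ 5 := by decide

theorem rho_not_isUnit : ¬IsUnit ρ := by
  rw [← Zsqrtd.norm_eq_one_iff]
  decide

theorem rho_pow_three_not_dvd_rho_sq : ¬ρ ^ 3 ∣ ρ ^ 2 := by
  rw [pow_dvd_pow_iff (by decide) rho_not_isUnit]
  norm_num

theorem rho_pow_three_dvd_pi_five_pow_odd_sub_one_add_rho_sq (k : ℕ) :
    ρ ^ 3 ∣ π₅ ^ (2 * k + 1) - 1 - -ρ ^ 2 := by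
  rw [← pi_five_sub_one, sub_sub_sub_cancel_right]
  calc ρ ^ 3 ∣ -ρ ^ 5 := dvd_neg.mpr (pow_dvd_pow ρ (by norm_num))
    _ = π₅ ^ 2 - 1 := pi_five_sq_sub_one.symm
    _ ∣ π₅ ^ (2 * k + 1) - π₅ := pow_odd_sub_self_dvd π₅ k

end GaussianInt

theorem rho_valuation_pi_pow_sub_one_odd_general (n : ℕ) (hodd : Odd n) :
    (⟨-1, 1⟩ : GaussianInt) ^ 2 ∣ (⟨1, 2⟩ : GaussianInt) ^ n - 1 ∧
      ¬ (⟨-1, 1⟩ : GaussianInt) ^ 3 ∣ (⟨1, 2⟩ : GaussianInt) ^ n - 1 := by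
  obtain ⟨k, rfl⟩ := hodd
  have hcong := GaussianInt.rho_pow_three_dvd_pi_five_pow_odd_sub_one_add_rho_sq k
  constructor
  · rw [dvd_iff_dvd_of_dvd_sub ((pow_dvd_pow _ (by norm_num)).trans hcong), dvd_neg]
  · rw [dvd_iff_dvd_of_dvd_sub hcong, dvd_neg]
    exact GaussianInt.rho_pow_three_not_dvd_rho_sq

theorem rho_valuation_pi_pow_sub_one_odd (n : ℕ) (hn : 0 < n) (hodd : Odd n) :
    (⟨-1, 1⟩ : GaussianInt) ^ 2 ∣ (⟨1, 2⟩ : GaussianInt) ^ n - 1 ∧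
      ¬ (⟨-1, 1⟩ : GaussianInt) ^ 3 ∣ (⟨1, 2⟩ : GaussianInt) ^ n - 1 :=
  rho_valuation_pi_pow_sub_one_odd_general n hodd
end

section
/- Let π₅ = 1 + 2i and ρ = −1 + i in ℤ[i], and let n be an odd positive integer. Then ρ³ divides π₅ⁿ + 1 in ℤ[i], but ρ⁴ does not. (That is, the exponent e₀ of ρ in the prime factorization of π₅ⁿ + 1 equals 3 when n is odd; this is the depth of the trees rooted at periodic vertices of the graph of θ on B_n for odd n.) -/
/-!
Since π₅ ^ 2 - 1 = -ρ⁵, every odd power π₅ ^ n is congruent to π₅ modulo ρ⁴, so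
π₅ ^ n + 1 ≡ π₅ + 1 = ρ³ (mod ρ⁴). A number congruent to ρ³ modulo ρ⁴ is divisible by ρ³ and,
as ρ is neither zero nor a unit, not by ρ⁴.
-/

theorem sq_sub_one_dvd_pow_sub_self {R : Type*} [CommRing R] (x : R) {n : ℕ} (hn : Odd n) :
    x ^ 2 - 1 ∣ x ^ n - x := by
  obtain ⟨k, rfl⟩ := hn
  calc x ^ 2 - 1 ∣ x * ((x ^ 2) ^ k - 1 ^ k) := (sub_dvd_pow_sub_pow _ _ k).mul_left x
    _ = x ^ (2 * k + 1) - x := by ring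

theorem pow_dvd_and_not_pow_succ_dvd_of_pow_succ_dvd_sub {R : Type*} [CommRing R]
    [IsDomain R] {p a : R} (hp₀ : p ≠ 0) (hp : ¬IsUnit p) {k : ℕ} (h : p ^ (k + 1) ∣ a - p ^ k) :
    p ^ k ∣ a ∧ ¬p ^ (k + 1) ∣ a := by
  have ha : a = (a - p ^ k) + p ^ k := by ring
  constructor
  · rw [ha]
    exact dvd_add ((pow_dvd_pow p k.le_succ).trans h) dvd_rfl
  · rw [ha, dvd_add_right h, pow_dvd_pow_iff hp₀ hp]
    omega

theorem gaussianInt_rho_ne_zero : (⟨-1, 1⟩ : GaussianInt) ≠ 0 := by decide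

theorem gaussianInt_rho_not_isUnit : ¬IsUnit (⟨-1, 1⟩ : GaussianInt) := by
  rw [← Zsqrtd.norm_eq_one_iff]
  decide

theorem gaussianInt_pi_sq_sub_one : (⟨1, 2⟩ : GaussianInt) ^ 2 - 1 = -(⟨-1, 1⟩ : GaussianInt) ^ 5 := by
  decide

theorem gaussianInt_pi_add_one : (⟨1, 2⟩ : GaussianInt) + 1 = (⟨-1, 1⟩ : GaussianInt) ^ 3 := by
  decide

theorem rho_valuation_pi_pow_add_one_odd_general (n : ℕ) (hodd : Odd n) :
    (⟨-1, 1⟩ : GaussianInt) ^ 3 ∣ (⟨1, 2⟩ : GaussianInt) ^ n + 1 ∧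
      ¬ (⟨-1, 1⟩ : GaussianInt) ^ 4 ∣ (⟨1, 2⟩ : GaussianInt) ^ n + 1 := by
  apply pow_dvd_and_not_pow_succ_dvd_of_pow_succ_dvd_sub gaussianInt_rho_ne_zero
    gaussianInt_rho_not_isUnit
  have h := sq_sub_one_dvd_pow_sub_self (⟨1, 2⟩ : GaussianInt) hodd
  rw [gaussianInt_pi_sq_sub_one, neg_dvd] at h
  rw [← gaussianInt_pi_add_one, add_sub_add_right_eq_sub]
  exact (pow_dvd_pow _ (by norm_num)).trans h

theorem rho_valuation_pi_pow_add_one_odd (n : ℕ) (hn : 0 < n) (hodd : Odd n) :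
    (⟨-1, 1⟩ : GaussianInt) ^ 3 ∣ (⟨1, 2⟩ : GaussianInt) ^ n + 1 ∧
      ¬ (⟨-1, 1⟩ : GaussianInt) ^ 4 ∣ (⟨1, 2⟩ : GaussianInt) ^ n + 1 :=
  rho_valuation_pi_pow_add_one_odd_general n hodd
end

section
/- Let π₅ = 1 + 2i and ρ = −1 + i in ℤ[i], and let n be an even positive integer. Then ρ² divides π₅ⁿ + 1 in ℤ[i], but ρ³ does not. (That is, the exponent e₀ of ρ in the prime factorization of π₅ⁿ + 1 equals 2 when n is even; this is the depth of the trees rooted at periodic vertices of the graph of θ on B_n for even n.) -/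
/-!
Since `π₅² - 1 = -4 + 4i` is divisible by `ρ⁴ = -4`, every even power satisfies `π₅ⁿ ≡ 1 (mod ρ⁴)`,
so `π₅ⁿ + 1 ≡ 2 (mod ρ⁴)`. Up to the unit `i`, `2 = ρ²`; and `ρ³ ∤ 2` because `N(ρ³) = 8 ∤ 4 = N(2)`.
-/

local notation "π₅" => (⟨1, 2⟩ : GaussianInt)
local notation "ρ" => (⟨-1, 1⟩ : GaussianInt)

theorem dvd_pow_sub_one_of_dvd_sq_sub_one {R : Type*} [CommRing R] {d x : R} (h : d ∣ x ^ 2 - 1)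
    {n : ℕ} (hn : Even n) : d ∣ x ^ n - 1 := by
  obtain ⟨k, rfl⟩ := hn
  rw [← two_mul, pow_mul]
  exact h.trans (sub_one_dvd_pow_sub_one _ k)

theorem rho_pow_four_dvd_pi_sq_sub_one : ρ ^ 4 ∣ π₅ ^ 2 - 1 :=
  ⟨⟨1, -1⟩, by decide⟩

theorem rho_sq_dvd_two : ρ ^ 2 ∣ 2 :=
  ⟨⟨0, 1⟩, by decide⟩

theorem not_rho_pow_three_dvd_two : ¬ ρ ^ 3 ∣ 2 := fun h => by
  have h8 := map_dvd Zsqrtd.normMonoidHom h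
  rw [map_pow] at h8
  change (2 : ℤ) ^ 3 ∣ 4 at h8
  norm_num at h8

theorem rho_valuation_pi_pow_add_one_even_general (n : ℕ) (heven : Even n) :
    (⟨-1, 1⟩ : GaussianInt) ^ 2 ∣ (⟨1, 2⟩ : GaussianInt) ^ n + 1 ∧
      ¬ (⟨-1, 1⟩ : GaussianInt) ^ 3 ∣ (⟨1, 2⟩ : GaussianInt) ^ n + 1 := by
  have h4 : ρ ^ 4 ∣ π₅ ^ n - 1 :=
    dvd_pow_sub_one_of_dvd_sq_sub_one rho_pow_four_dvd_pi_sq_sub_one heven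
  have hsplit : π₅ ^ n + 1 = (π₅ ^ n - 1) + 2 := by ring
  rw [hsplit, dvd_add_right ((pow_dvd_pow _ (by norm_num)).trans h4),
    dvd_add_right ((pow_dvd_pow _ (by norm_num)).trans h4)]
  exact ⟨rho_sq_dvd_two, not_rho_pow_three_dvd_two⟩

theorem rho_valuation_pi_pow_add_one_even (n : ℕ) (hn : 0 < n) (heven : Even n) :
    (⟨-1, 1⟩ : GaussianInt) ^ 2 ∣ (⟨1, 2⟩ : GaussianInt) ^ n + 1 ∧
      ¬ (⟨-1, 1⟩ : GaussianInt) ^ 3 ∣ (⟨1, 2⟩ : GaussianInt) ^ n + 1 :=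
  rho_valuation_pi_pow_add_one_even_general n heven
end
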